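/- Let H ∈ M_N({±1}) be a Hadamard matrix with N ≥ 4 whose top-left 2×2 block is [[1,1],[1,−1]] and whose first two rows and columns are arranged so that B and C = Bᵗ consist of the column/row patterns (1,1) and (1,−1) in blocks of sizes N/2−1 each. Then for the complementary (N−2)×(N−2) block D, the matrix T = √(DᵗD) equals √N·I − S where S is block diagonal with two blocks of size N/2−1, each equal to (2/(√2+√N)) times the all-ones matrix; consequently the characteristic polynomial of T is (λ−√2)²(λ−√N)^{N−4} and |det D| = 2·N^{N/2−2}. -/

import Mathlib

/-!
Because `H Hᵀ = N I` forces `Hᵀ H = N I`, the lower-right block gives `DᵀD = N I − BᵀB`, and the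
sign pattern of `B` makes `BᵀB` block diagonal with blocks `2J`. With `c = 2/(√2 + √N)` one has
`n c = √N − √2`, so `K = √N I − cJ` satisfies `K² = N I − 2J`; moreover `K` is positive
semidefinite, its eigenvalues being `√N` on `𝟙^⊥` and `√N − nc = √2` on `𝟙`. Uniqueness of positive
square roots gives `√(DᵀD) = diag(K, K)`, and the characteristic polynomial and
`|det D| = (det K)²` follow from `det (a I + b J) = (a + n b) aⁿ⁻¹`.
-/

open Matrix Polynomial

section
open scoped ComplexOrder
/-- The square root of a positive semidefinite matrix, as `Matrix.PosSemidef.sqrt`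
was defined in Mathlib (Dec 2024); it has since been removed. -/
noncomputable def Matrix.PosSemidef.sqrt {n 𝕜 : Type*} [Fintype n] [DecidableEq n] [RCLike 𝕜]
    {A : Matrix n n 𝕜} (hA : A.PosSemidef) : Matrix n n 𝕜 :=
  hA.1.eigenvectorUnitary.1 * diagonal ((↑) ∘ (fun x : ℝ => Real.sqrt x) ∘ hA.1.eigenvalues) *
    (star hA.1.eigenvectorUnitary : Matrix n n 𝕜)
end

namespace Matrix

section

variable {ι : Type*} [Fintype ι]

theorem of_one_mul_of_one {R : Type*} [CommRing R] :
    (of fun _ _ => 1 : Matrix ι ι R) * of (fun _ _ => 1) =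
      (Fintype.card ι : R) • of fun _ _ => 1 := by
  ext i j
  simp [mul_apply]

variable [DecidableEq ι]

theorem smul_one_add_smul_of_one_mul_self {R : Type*} [CommRing R] (a b : R) :
    (a • 1 + b • of fun _ _ => 1 : Matrix ι ι R) * (a • 1 + b • of fun _ _ => 1) =
      a ^ 2 • 1 + (2 * a * b + Fintype.card ι * b ^ 2) • of fun _ _ => 1 := by
  simp only [add_mul, mul_add, smul_mul_smul_comm, one_mul, mul_one, of_one_mul_of_one,
    smul_smul]
  match_scalars <;> ring

theorem det_smul_one_add_smul_of_one {K : Type*} [Field K] [Nonempty ι] {a : K} (ha : a ≠ 0)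
    (b : K) :
    (a • 1 + b • of fun _ _ => 1 : Matrix ι ι K).det =
      (a + Fintype.card ι * b) * a ^ (Fintype.card ι - 1) := by
  have hfactor : (a • 1 + b • of fun _ _ => 1 : Matrix ι ι K) =
      a • ((1 : Matrix ι ι K) +
        replicateCol Unit (fun _ : ι => b / a) * replicateRow Unit (fun _ : ι => (1 : K))) := by
    ext i j
    by_cases h : i = j <;> simp [mul_apply, h, mul_add, mul_div_cancel₀ _ ha]
  have hcard : a ^ Fintype.card ι = a * a ^ (Fintype.card ι - 1) :=
    (mul_pow_sub_one Fintype.card_ne_zero a).symm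
  rw [hfactor, det_smul, det_one_add_replicateCol_mul_replicateRow, hcard]
  simp only [dotProduct, one_mul, Finset.sum_const, Finset.card_univ, nsmul_eq_mul]
  field_simp

theorem charpoly_smul_one_add_smul_of_one {K : Type*} [Field K] [Nonempty ι] (a b : K) :
    (a • 1 + b • of fun _ _ => 1 : Matrix ι ι K).charpoly =
      (X - C (a + Fintype.card ι * b)) * (X - C a) ^ (Fintype.card ι - 1) := by
  let f := algebraMap K[X] (RatFunc K)
  have hf : Function.Injective f := RatFunc.algebraMap_injective K
  have hcharmatrix : (a • 1 + b • of fun _ _ => 1 : Matrix ι ι K).charmatrix.map f =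
      f (X - C a) • 1 + f (-C b) • of fun _ _ => 1 := by
    ext i j
    by_cases h : i = j
    · simp [h]
      ring
    · simp [h]
  have hXa : f (X - C a) ≠ 0 := (map_ne_zero_iff f hf).mpr (X_sub_C_ne_zero a)
  apply hf
  rw [charpoly, RingHom.map_det, RingHom.mapMatrix_apply, hcharmatrix,
    det_smul_one_add_smul_of_one hXa]
  simp only [map_sub, map_mul, map_pow, map_neg, map_natCast, map_add]
  ring

theorem posSemidef_smul_one_add_smul_of_one {a b : ℝ} (ha : 0 ≤ a)
    (hab : 0 ≤ a + Fintype.card ι * b) :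
    (a • 1 + b • of fun _ _ => 1 : Matrix ι ι ℝ).PosSemidef := by
  refine .of_dotProduct_mulVec_nonneg ?_ fun x => ?_
  · ext i j
    by_cases h : i = j <;> simp [h, Ne.symm]
  · have hquad : star x ⬝ᵥ ((a • 1 + b • of fun _ _ => 1 : Matrix ι ι ℝ) *ᵥ x) =
        a * ∑ i, x i ^ 2 + b * (∑ i, x i) ^ 2 := by
      have hmulVec : (a • 1 + b • of fun _ _ => 1 : Matrix ι ι ℝ) *ᵥ x =
          a • x + (b * ∑ i, x i) • fun _ => 1 := by
        ext i
        simp [mulVec, dotProduct, add_mul, Finset.sum_add_distrib, one_apply, Finset.mul_sum]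
      rw [hmulVec, star_trivial, dotProduct_add, dotProduct_smul, dotProduct_smul]
      simp only [dotProduct, smul_eq_mul, mul_one, sq]
      ring
    have hcs : (∑ i, x i) ^ 2 ≤ Fintype.card ι * ∑ i, x i ^ 2 := sq_sum_le_card_mul_sum_sq
    have hsq : 0 ≤ ∑ i, x i ^ 2 := by positivity
    rw [hquad]
    rcases le_total 0 b with hb | hb
    · positivity
    · nlinarith

theorem transpose_mul_self_eq_smul_one {K : Type*} [Field K] {H : Matrix ι ι K} {N : K}
    (hN : N ≠ 0) (hH : H * Hᵀ = N • 1) : Hᵀ * H = N • 1 := by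
  have hinv : H * (N⁻¹ • Hᵀ) = 1 := by
    rw [Matrix.mul_smul, hH, smul_smul, inv_mul_cancel₀ hN, one_smul]
  rw [← mul_eq_one_comm.mp hinv, smul_mul, smul_smul, mul_inv_cancel₀ hN, one_smul]

theorem abs_det_eq_of_transpose_mul_self_eq {D M : Matrix ι ι ℝ} (h : Dᵀ * D = M * M) :
    |D.det| = |M.det| := by
  have hdet := congrArg det h
  rw [det_mul, det_mul, det_transpose, ← sq, ← sq] at hdet
  exact (sq_eq_sq_iff_abs_eq_abs _ _).mp hdet

open scoped MatrixOrder in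
theorem PosSemidef.sqrt_eq_of_sq_eq {A B : Matrix ι ι ℝ} (hA : A.PosSemidef)
    (hB : B.PosSemidef) (hBA : B ^ 2 = A) : hA.sqrt = B := by
  have hsqrt : hA.sqrt = CFC.sqrt A := by
    rw [CFC.sqrt_eq_cfc, cfc_nnreal_eq_real _ A, hA.1.cfc_eq]
    simp only [IsHermitian.cfc, PosSemidef.sqrt, Unitary.conjStarAlgAut_apply, Real.coe_sqrt,
      Real.coe_toNNReal']
    congr 3
    funext i
    simp [max_eq_left (hA.eigenvalues_nonneg i)]
  rw [hsqrt, ← hBA, CFC.sqrt_sq B hB.nonneg]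

end

section

variable {l m R : Type*} [Fintype l] [Fintype m]

theorem PosSemidef.fromBlocks_zero [CommRing R] [PartialOrder R] [StarRing R]
    [IsOrderedAddMonoid R] {A : Matrix l l R} {D : Matrix m m R} (hA : A.PosSemidef)
    (hD : D.PosSemidef) : (fromBlocks A 0 0 D).PosSemidef := by
  refine .of_dotProduct_mulVec_nonneg (hA.1.fromBlocks (by simp) hD.1) fun x => ?_
  rw [← Sum.elim_comp_inl_inr x, fromBlocks_mulVec]
  simp only [zero_mulVec, add_zero, zero_add, Function.star_sumElim, sumElim_dotProduct_sumElim]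
  exact add_nonneg (hA.dotProduct_mulVec_nonneg _) (hD.dotProduct_mulVec_nonneg _)

theorem transpose_mul_add_transpose_mul_of_fromBlocks [DecidableEq l] [DecidableEq m] [CommRing R]
    {A : Matrix l l R} {B : Matrix l m R} {C : Matrix m l R} {D : Matrix m m R} {N : R}
    (h : (fromBlocks A B C D)ᵀ * fromBlocks A B C D = N • 1) : Bᵀ * B + Dᵀ * D = N • 1 := by
  rw [fromBlocks_transpose, fromBlocks_multiply, ← fromBlocks_one, fromBlocks_smul] at h
  simpa using congrArg toBlocks₂₂ h

end

end Matrix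

theorem sqrt_two_mul_add_two_sub_mul_two_div {x : ℝ} (hx : 0 ≤ x) :
    √(2 * x + 2) - x * (2 / (√2 + √(2 * x + 2))) = √2 := by
  have hpos : 0 < √2 + √(2 * x + 2) := by positivity
  rw [sub_eq_iff_eq_add, ← sub_eq_iff_eq_add', mul_div_assoc', eq_div_iff hpos.ne']
  nlinarith [Real.sq_sqrt (show (0 : ℝ) ≤ 2 by norm_num),
    Real.sq_sqrt (show 0 ≤ 2 * x + 2 by linarith)]

noncomputable def gramRootBlock (n : ℕ) : Matrix (Fin n) (Fin n) ℝ :=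
  √(2 * n + 2) • 1 + (-(2 / (√2 + √(2 * n + 2)))) • of fun _ _ => 1

theorem sqrt_add_card_mul_neg_two_div (n : ℕ) :
    √(2 * n + 2) + Fintype.card (Fin n) * -(2 / (√2 + √(2 * n + 2))) = √2 := by
  rw [Fintype.card_fin, mul_neg, ← sub_eq_add_neg]
  exact sqrt_two_mul_add_two_sub_mul_two_div n.cast_nonneg

theorem gramRootBlock_mul_self (n : ℕ) :
    gramRootBlock n * gramRootBlock n = (2 * n + 2 : ℝ) • 1 - (2 : ℝ) • of fun _ _ => 1 := by
  have hc : 2 / (√2 + √(2 * n + 2)) * (√2 + √(2 * n + 2)) = 2 :=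
    div_mul_cancel₀ _ (by positivity)
  rw [gramRootBlock, smul_one_add_smul_of_one_mul_self, sub_eq_add_neg, ← neg_smul]
  match_scalars
  · rw [mul_one, mul_one, Real.sq_sqrt (by positivity)]
  · linear_combination (-(2 / (√2 + √(2 * n + 2)))) * sqrt_add_card_mul_neg_two_div n - hc

theorem posSemidef_gramRootBlock (n : ℕ) : (gramRootBlock n).PosSemidef :=
  posSemidef_smul_one_add_smul_of_one (by positivity)
    (by rw [sqrt_add_card_mul_neg_two_div]; positivity)

theorem charpoly_gramRootBlock {n : ℕ} [NeZero n] :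
    (gramRootBlock n).charpoly = (X - C √2) * (X - C √(2 * n + 2)) ^ (n - 1) := by
  rw [gramRootBlock, charpoly_smul_one_add_smul_of_one, sqrt_add_card_mul_neg_two_div,
    Fintype.card_fin]

theorem det_gramRootBlock {n : ℕ} [NeZero n] :
    (gramRootBlock n).det = √2 * √(2 * n + 2) ^ (n - 1) := by
  rw [gramRootBlock, det_smul_one_add_smul_of_one (by positivity), sqrt_add_card_mul_neg_two_div,
    Fintype.card_fin]

theorem transpose_mul_self_eq_fromBlocks_of_rows {n : ℕ} {B : Matrix (Fin 2) (Fin n ⊕ Fin n) ℝ}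
    (hB0 : ∀ j, B 0 j = 1) (hB1l : ∀ j, B 1 (Sum.inl j) = 1)
    (hB1r : ∀ j, B 1 (Sum.inr j) = -1) :
    Bᵀ * B = fromBlocks ((2 : ℝ) • of fun _ _ => 1) 0 0 ((2 : ℝ) • of fun _ _ => 1) := by
  ext (i | i) (j | j) <;> simp [mul_apply, Fin.sum_univ_two, hB0, hB1l, hB1r] <;> norm_num

theorem stmt_17_general (n : ℕ) (hn : 1 ≤ n)
    (B : Matrix (Fin 2) (Fin n ⊕ Fin n) ℝ)
    (C : Matrix (Fin n ⊕ Fin n) (Fin 2) ℝ)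
    (D : Matrix (Fin n ⊕ Fin n) (Fin n ⊕ Fin n) ℝ)
    (hB0 : ∀ j, B 0 j = 1)
    (hB1l : ∀ j, B 1 (Sum.inl j) = 1) (hB1r : ∀ j, B 1 (Sum.inr j) = -1)
    (hH : Matrix.fromBlocks !![1, 1; 1, -1] B C D *
        (Matrix.fromBlocks !![1, 1; 1, -1] B C D)ᵀ = ((2 * n + 2 : ℕ) : ℝ) • 1) :
    letI c : ℝ := 2 / (Real.sqrt 2 + Real.sqrt (2 * n + 2))
    letI J : Matrix (Fin n) (Fin n) ℝ := Matrix.of fun _ _ => (1 : ℝ)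
    letI S := Matrix.fromBlocks (c • J) 0 0 (c • J)
    Matrix.PosSemidef.sqrt (Matrix.posSemidef_conjTranspose_mul_self D) =
        Real.sqrt (2 * n + 2) • (1 : Matrix (Fin n ⊕ Fin n) (Fin n ⊕ Fin n) ℝ) - S ∧
      (Real.sqrt (2 * n + 2) • (1 : Matrix (Fin n ⊕ Fin n) (Fin n ⊕ Fin n) ℝ) - S).charpoly =
        ((X : ℝ[X]) - Polynomial.C (Real.sqrt 2)) ^ 2 *
          ((X : ℝ[X]) - Polynomial.C (Real.sqrt (2 * n + 2))) ^ (2 * n - 2) ∧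
      |D.det| = 2 * ((2 * n + 2 : ℕ) : ℝ) ^ (n - 1) := by
  have : NeZero n := ⟨by omega⟩
  have hN : ((2 * n + 2 : ℕ) : ℝ) = 2 * n + 2 := by push_cast; ring
  set K := gramRootBlock n
  have hT : √(2 * n + 2) • 1 - fromBlocks
      ((2 / (√2 + √(2 * n + 2))) • of fun _ _ => 1) 0 0
      ((2 / (√2 + √(2 * n + 2))) • of fun _ _ => 1) = fromBlocks K 0 0 K := by
    ext (i | i) (j | j) <;> simp [K, gramRootBlock, one_apply, sub_eq_add_neg]
  have hDD : Dᵀ * D = fromBlocks K 0 0 K * fromBlocks K 0 0 K := by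
    have hgram := transpose_mul_add_transpose_mul_of_fromBlocks
      (transpose_mul_self_eq_smul_one (by positivity) hH)
    rw [transpose_mul_self_eq_fromBlocks_of_rows hB0 hB1l hB1r] at hgram
    rw [eq_sub_of_add_eq' hgram, fromBlocks_multiply, gramRootBlock_mul_self, hN]
    ext (i | i) (j | j) <;> simp [one_apply]
  refine ⟨?_, ?_, ?_⟩
  · rw [hT]
    refine (posSemidef_conjTranspose_mul_self D).sqrt_eq_of_sq_eq
      ((posSemidef_gramRootBlock n).fromBlocks_zero (posSemidef_gramRootBlock n)) ?_
    rw [sq, ← hDD, conjTranspose_eq_transpose_of_trivial]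
  · rw [hT, charpoly_fromBlocks_zero₂₁, charpoly_gramRootBlock,
      show 2 * n - 2 = (n - 1) + (n - 1) by omega]
    ring
  · rw [abs_det_eq_of_transpose_mul_self_eq hDD, det_fromBlocks_zero₂₁, det_gramRootBlock, hN,
      show √2 * √(2 * n + 2) ^ (n - 1) * (√2 * √(2 * n + 2) ^ (n - 1)) =
        √2 ^ 2 * (√(2 * n + 2) ^ 2) ^ (n - 1) by ring, Real.sq_sqrt (by positivity),
      Real.sq_sqrt (by positivity), abs_of_nonneg (by positivity)]

/-- Let `H ∈ M_N(±1)` (with `N = 2n+2 ≥ 4`) be a Hadamard matrix with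
top-left `2×2` block `A = [[1,1],[1,−1]]`, whose first two rows/columns are
arranged so that `B` (and `C = Bᵗ`) consist of the column patterns `(1,1)` and
`(1,−1)` in blocks of size `N/2 − 1 = n` each. Then for the complementary
block `D`, `T = √(DᵗD) = √N·I − S` where `S` is block diagonal with two
blocks `(2/(√2+√N))·J_n`; consequently
`charpoly T = (λ−√2)²(λ−√N)^{N−4}` and `|det D| = 2·N^{N/2−2}`. -/
theorem stmt_17 (n : ℕ) (hn : 1 ≤ n)
    (B : Matrix (Fin 2) (Fin n ⊕ Fin n) ℝ)
    (C : Matrix (Fin n ⊕ Fin n) (Fin 2) ℝ)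
    (D : Matrix (Fin n ⊕ Fin n) (Fin n ⊕ Fin n) ℝ)
    (hB0 : ∀ j, B 0 j = 1)
    (hB1l : ∀ j, B 1 (Sum.inl j) = 1) (hB1r : ∀ j, B 1 (Sum.inr j) = -1)
    (hC : C = Bᵀ)
    (hD : ∀ i j, D i j = 1 ∨ D i j = -1)
    (hH : Matrix.fromBlocks !![1, 1; 1, -1] B C D *
        (Matrix.fromBlocks !![1, 1; 1, -1] B C D)ᵀ = ((2 * n + 2 : ℕ) : ℝ) • 1) :
    letI c : ℝ := 2 / (Real.sqrt 2 + Real.sqrt (2 * n + 2))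
    letI J : Matrix (Fin n) (Fin n) ℝ := Matrix.of fun _ _ => (1 : ℝ)
    letI S := Matrix.fromBlocks (c • J) 0 0 (c • J)
    Matrix.PosSemidef.sqrt (Matrix.posSemidef_conjTranspose_mul_self D) =
        Real.sqrt (2 * n + 2) • (1 : Matrix (Fin n ⊕ Fin n) (Fin n ⊕ Fin n) ℝ) - S ∧
      (Real.sqrt (2 * n + 2) • (1 : Matrix (Fin n ⊕ Fin n) (Fin n ⊕ Fin n) ℝ) - S).charpoly =
        ((X : ℝ[X]) - Polynomial.C (Real.sqrt 2)) ^ 2 *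
          ((X : ℝ[X]) - Polynomial.C (Real.sqrt (2 * n + 2))) ^ (2 * n - 2) ∧
      |D.det| = 2 * ((2 * n + 2 : ℕ) : ℝ) ^ (n - 1) :=
  stmt_17_general n hn B C D hB0 hB1l hB1r hH
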